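/- arXiv:1406.0237 — 3 statements merged into one kernel-verified Lean document; each statement's English description precedes it below -/
import Mathlib

section
/- Let A, B, C be finite abelian p-groups with B a subgroup of C. Suppose B is a proper subgroup of C, B and C have the same minimal number of generators (rank), and, writing the cyclic decompositions B ≅ ∏ C_{p^{β_j}} and C ≅ ∏ C_{p^{γ_j}} with invariants in decreasing order, the exponent of A divides p^{β_r}, where r is the largest index with β_r < γ_r. Then Hom(A,B) = Hom(A,C), i.e., every homomorphism from A to C has image contained in B. -/
/-- The subgroup of `MulAut G` of automorphisms `α` with `x⁻¹ * α x ∈ X` for all `x`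
(automorphisms centralizing `G/X`). -/
def autCentMod {G : Type*} [Group G] (X : Subgroup G) : Subgroup (MulAut G) where
  carrier := {α | ∀ x : G, x⁻¹ * α x ∈ X}
  one_mem' := by intro x; simpa using X.one_mem
  mul_mem' := by
    intro α β hα hβ x
    have h := X.mul_mem (hβ x) (hα (β x))
    simpa [mul_assoc] using h
  inv_mem' := by
    intro α hα x
    have h := X.inv_mem (hα (α⁻¹ x))
    simpa [MulAut.apply_inv_self, mul_inv_rev] using h

/-- The subgroup of `MulAut G` of automorphisms fixing `Y` pointwise. -/
def autFix {G : Type*} [Group G] (Y : Subgroup G) : Subgroup (MulAut G) where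
  carrier := {α | ∀ y ∈ Y, α y = y}
  one_mem' := by intro y _; rfl
  mul_mem' := by
    intro α β hα hβ y hy
    have : (α * β) y = α (β y) := rfl
    rw [this, hβ y hy, hα y hy]
  inv_mem' := by
    intro α hα y hy
    have := hα y hy
    calc α⁻¹ y = α⁻¹ (α y) := by rw [this]
    _ = y := by simp

/-- A group is purely non-abelian if it has no nontrivial abelian (internal) direct factor. -/
def IsPurelyNonabelian (G : Type*) [Group G] : Prop :=
  ¬ ∃ H K : Subgroup G, H ≠ ⊥ ∧ H ≤ Subgroup.center G ∧ K.Normal ∧ IsCompl H K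

/-- `X` has invariant-factor decomposition `p^(e 0) ≥ p^(e 1) ≥ …`. -/
def HasDecomp (p : ℕ) (X : Type*) [Group X] {m : ℕ} (e : Fin m → ℕ) : Prop :=
  Antitone e ∧ (∀ j, 0 < e j) ∧
    Nonempty (X ≃* ((j : Fin m) → Multiplicative (ZMod (p ^ e j))))

/-- `n ≤ var(X, Y)`, where `var(X,Y) = p^(β r)` and `r` is the largest index at which the
invariant factor exponents `β` of `X` and `γ` of `Y` differ. -/
def varLe (p : ℕ) (X Y : Type*) [Group X] [Group Y] (n : ℕ) : Prop :=
  ∀ (m : ℕ) (β γ : Fin m → ℕ), HasDecomp p X β → HasDecomp p Y γ →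
    ∀ r : Fin m, β r < γ r → (∀ j, r < j → β j = γ j) → n ≤ p ^ β r

/-- `n = var(X, Y)`. -/
def varEq (p : ℕ) (X Y : Type*) [Group X] [Group Y] (n : ℕ) : Prop :=
  ∀ (m : ℕ) (β γ : Fin m → ℕ), HasDecomp p X β → HasDecomp p Y γ →
    ∀ r : Fin m, β r < γ r → (∀ j, r < j → β j = γ j) → n = p ^ β r

/-- A central subgroup is commutative. -/
def centralCommGroup {G : Type*} [Group G] {X : Subgroup G}
    (hX : X ≤ Subgroup.center G) : CommGroup ↥X :=
  { (inferInstance : Group ↥X) with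
    mul_comm := fun a b => Subtype.ext (Subgroup.mem_center_iff.mp (hX b.2) a.1) }

/-!
The image of any homomorphism `A → C` lies in the `n`-torsion `C[n]` of `C`, where
`n = p ^ β r`, so it suffices to show `C[n] ≤ B`. For `B ≤ C` this follows from
`|B[n]| ≥ |C[n]|`, and both orders can be read off the decompositions:
`|B[n]| = ∏ gcd(p ^ β j, n)` and `|C[n]| = ∏ gcd(p ^ γ j, n)`. The factors agree for every
`j`: for `j > r` because `β j = γ j`, and for `j ≤ r` because both equal `n`, as
`β r ≤ β j` and `β r < γ r ≤ γ j`.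
-/

theorem card_powMonoidHom_ker_pi {ι : Type*} [Fintype ι] (G : ι → Type*) [∀ i, CommGroup (G i)]
    (n : ℕ) :
    Nat.card (powMonoidHom n : ((i : ι) → G i) →* _).ker =
      ∏ i, Nat.card (powMonoidHom n : G i →* G i).ker := by
  rw [← Nat.card_pi]
  refine Nat.card_congr ((Equiv.subtypeEquivRight fun x => ?_).trans Equiv.subtypePiEquivPi)
  simp [MonoidHom.mem_ker, funext_iff]

theorem card_powMonoidHom_ker_congr {G H : Type*} [CommGroup G] [CommGroup H] (e : G ≃* H)
    (n : ℕ) :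
    Nat.card (powMonoidHom n : G →* G).ker = Nat.card (powMonoidHom n : H →* H).ker :=
  Nat.card_congr <| e.toEquiv.subtypeEquiv fun x => by
    simp [MonoidHom.mem_ker, ← map_pow]

theorem card_powMonoidHom_ker_zmod (M n : ℕ) [NeZero M] :
    Nat.card (powMonoidHom n : Multiplicative (ZMod M) →* _).ker = M.gcd n := by
  rw [IsCyclic.card_powMonoidHom_ker, Nat.card_eq_fintype_card, Fintype.card_multiplicative,
    ZMod.card]

theorem card_powMonoidHom_ker_of_mulEquiv_pi_zmod {G ι : Type*} [CommGroup G] [Fintype ι]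
    {M : ι → ℕ} [∀ i, NeZero (M i)] (e : G ≃* ((i : ι) → Multiplicative (ZMod (M i))))
    (n : ℕ) :
    Nat.card (powMonoidHom n : G →* G).ker = ∏ i, (M i).gcd n := by
  simp only [card_powMonoidHom_ker_congr e, card_powMonoidHom_ker_pi, card_powMonoidHom_ker_zmod]

theorem Subgroup.powMonoidHom_ker_le_of_card_le {G : Type*} [CommGroup G] [Finite G]
    (H : Subgroup G) (n : ℕ)
    (hcard : Nat.card (powMonoidHom n : G →* G).ker ≤ Nat.card (powMonoidHom n : H →* H).ker) :
    (powMonoidHom n : G →* G).ker ≤ H := by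
  have hle : (powMonoidHom n : H →* H).ker.map H.subtype ≤ (powMonoidHom n : G →* G).ker := by
    rintro _ ⟨x, hx, rfl⟩
    simpa [MonoidHom.mem_ker, Subtype.ext_iff] using hx
  rw [← Subgroup.eq_of_le_of_card_ge hle
    (by rwa [Subgroup.card_map_of_injective H.subtype_injective])]
  exact Subgroup.map_subtype_le _

theorem hom_eq_of_varLe_general {p : ℕ} (hp : p.Prime) {A C : Type*}
    [CommGroup A] [CommGroup C] [Fintype C]
    (B : Subgroup C)
    {m : ℕ} (β γ : Fin m → ℕ)
    (hβ : Antitone β)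
    (hγ : Antitone γ)
    (eB : ↥B ≃* ((j : Fin m) → Multiplicative (ZMod (p ^ β j))))
    (eC : C ≃* ((j : Fin m) → Multiplicative (ZMod (p ^ γ j))))
    (r : Fin m) (hr : β r < γ r) (hr' : ∀ j, r < j → β j = γ j)
    (hexp : Monoid.exponent A ∣ p ^ β r) :
    ∀ (f : A →* C) (a : A), f a ∈ B := by
  intro f a
  have : NeZero p := ⟨hp.ne_zero⟩
  have hgcd : ∀ j, (p ^ γ j).gcd (p ^ β r) = (p ^ β j).gcd (p ^ β r) := by
    intro j
    rcases le_or_gt j r with hjr | hrj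
    · rw [Nat.gcd_eq_right (pow_dvd_pow p (hr.le.trans (hγ hjr))),
        Nat.gcd_eq_right (pow_dvd_pow p (hβ hjr))]
    · rw [hr' j hrj]
  have htorsion : (powMonoidHom (p ^ β r) : C →* C).ker ≤ B := by
    refine B.powMonoidHom_ker_le_of_card_le _ (le_of_eq ?_)
    rw [card_powMonoidHom_ker_of_mulEquiv_pi_zmod eC,
      card_powMonoidHom_ker_of_mulEquiv_pi_zmod eB]
    exact Finset.prod_congr rfl fun j _ => hgcd j
  apply htorsion
  rw [MonoidHom.mem_ker, powMonoidHom_apply, ← map_pow,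
    Monoid.exponent_dvd_iff_forall_pow_eq_one.mp hexp a, map_one]

/-- Lemma 2.2(i), sufficiency: if `B < C`, `d(B) = d(C)` and `exp(A)` divides
`var(B, C) = p^(β r)`, then `Hom(A, B) = Hom(A, C)`, i.e. every homomorphism
from `A` to `C` has image contained in `B`. -/
theorem hom_eq_of_varLe {p : ℕ} (hp : p.Prime) {A C : Type*}
    [CommGroup A] [Fintype A] [CommGroup C] [Fintype C]
    (hA : IsPGroup p A) (hC : IsPGroup p C)
    (B : Subgroup C) (hBC : B ≠ ⊤)
    (hrank : Group.rank ↥B = Group.rank C)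
    {m : ℕ} (β γ : Fin m → ℕ)
    (hβ : Antitone β) (hβ0 : ∀ j, 0 < β j)
    (hγ : Antitone γ) (hγ0 : ∀ j, 0 < γ j)
    (eB : ↥B ≃* ((j : Fin m) → Multiplicative (ZMod (p ^ β j))))
    (eC : C ≃* ((j : Fin m) → Multiplicative (ZMod (p ^ γ j))))
    (r : Fin m) (hr : β r < γ r) (hr' : ∀ j, r < j → β j = γ j)
    (hexp : Monoid.exponent A ∣ p ^ β r) :
    ∀ (f : A →* C) (a : A), f a ∈ B :=
  hom_eq_of_varLe_general hp B β γ hβ hγ eB eC r hr hr' hexp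
end

section
/- Let G be a finite p-group of nilpotence class 2. Then IA(G) = IA(G)* (every IA-automorphism of G fixes the center pointwise) if and only if either G' = Z(G), or d(G/Z(G)) = d(G/G') and exp(G') ≤ var(G/Z(G), G/G'). -/
/-!
Since `G' ≤ Z(G)`, the map `α ↦ (x ↦ x⁻¹ α(x))` identifies `IA(G)` with `Hom(G, G') =
Hom(G/G', G')`, and `α` fixes `Z(G)` iff the corresponding homomorphism kills `Z(G)`. As `G'`
is abelian of exponent `p^c`, it contains a cyclic group of order `p^c`, and the homomorphisms
`G/G' → G'` all kill an element iff it is a `p^c`-th power. So `IA(G) = IA(G)*` says that the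
kernel `Z(G)/G'` of `G/G' → G/Z(G)` lies in `(G/G')^{p^c}`.

For a surjection `A → Q` of finite abelian `p`-groups with invariant factors `p^γ_j`, `p^β_j`,
the kernel lies in `A^{p^k}` iff `|Q : Q^{p^k}| = |A : A^{p^k}|`, i.e. iff
`∑ min(β_j, k) = ∑ min(γ_j, k)`. Holding for all `k ≤ c`, this says for `k = 1` that `Q` and
`A` have the same rank, and then, comparing the sequences at the last index where they differ,
that `p^c ≤ var(Q, A)`.
-/

open Subgroup

section ZModHom

variable {C : Type*} [Group C]

def zmodPowersHom (N : ℕ) [NeZero N] {g : C} (hg : g ^ N = 1) : Multiplicative (ZMod N) →* C where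
  toFun u := g ^ u.toAdd.val
  map_one' := by simp
  map_mul' u v := by
    simp only [toAdd_mul, ZMod.val_add, ← pow_add]
    exact (pow_eq_pow_mod _ hg).symm

lemma zmodPowersHom_apply (N : ℕ) [NeZero N] {g : C} (hg : g ^ N = 1)
    (u : Multiplicative (ZMod N)) : zmodPowersHom N hg u = g ^ u.toAdd.val :=
  rfl

lemma ZMod.mem_range_powMonoidHom_of_forall_hom_eq_one {p : ℕ} (hp : p.Prime) {e c : ℕ} {g : C}
    (hg : orderOf g = p ^ c) (u : Multiplicative (ZMod (p ^ e)))
    (hu : ∀ φ : Multiplicative (ZMod (p ^ e)) →* C, φ u = 1) :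
    u ∈ (powMonoidHom (p ^ c)).range := by
  have : NeZero (p ^ e) := ⟨(pow_pos hp.pos e).ne'⟩
  set m := min e c
  have hc : p ^ c = p ^ (c - m) * p ^ m := by rw [← pow_add]; congr 1; omega
  have hg' : (g ^ p ^ (c - m)) ^ p ^ e = 1 := by
    rw [← pow_mul, ← orderOf_dvd_iff_pow_eq_one, hg, hc]
    exact mul_dvd_mul_left _ (pow_dvd_pow p (min_le_left e c))
  have hdvd : p ^ m ∣ u.toAdd.val := by
    have h := hu (zmodPowersHom (p ^ e) hg')
    rw [zmodPowersHom_apply, ← pow_mul, ← orderOf_dvd_iff_pow_eq_one, hg, hc] at h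
    exact Nat.dvd_of_mul_dvd_mul_left (pow_pos hp.pos _) h
  obtain ⟨t, ht⟩ := hdvd
  rcases le_total c e with hce | hec
  · refine ⟨Multiplicative.ofAdd (t : ZMod (p ^ e)), ?_⟩
    rw [show m = c from min_eq_right hce] at ht
    rw [powMonoidHom_apply, ← ofAdd_nsmul, nsmul_eq_mul, ← Nat.cast_mul, ← ht,
      ZMod.natCast_zmod_val, ofAdd_toAdd]
  · have hlt := ZMod.val_lt u.toAdd
    rw [ht, show m = e from min_eq_left hec] at hlt
    have ht0 : t = 0 :=
      Nat.lt_one_iff.mp ((Nat.mul_lt_mul_left (pow_pos hp.pos e)).mp (by rwa [mul_one]))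
    rw [ht0, mul_zero, ZMod.val_eq_zero] at ht
    exact ⟨1, by rw [map_one, ← ofAdd_toAdd u, ht, ofAdd_zero]⟩

end ZModHom

lemma Group.rank_pi_le_of_isCyclic {m : ℕ} {C : Fin m → Type*} [∀ j, Group (C j)]
    [∀ j, IsCyclic (C j)] [∀ j, Finite (C j)] : Group.rank ((j : Fin m) → C j) ≤ m := by
  classical
  choose g hg using fun j => (isCyclic_iff_exists_zpowers_eq_top (α := C j)).mp inferInstance
  let S : Finset ((j : Fin m) → C j) := Finset.univ.image fun j => Pi.mulSingle j (g j)
  have hS : closure (S : Set ((j : Fin m) → C j)) = ⊤ := by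
    rw [eq_top_iff, ← pi_top Set.univ, pi_le_iff]
    intro j
    rw [← hg j, MonoidHom.map_zpowers, zpowers_le]
    exact subset_closure (by simp [S])
  calc Group.rank _ ≤ S.card := Group.rank_le hS
    _ ≤ m := Finset.card_image_le.trans (by simp)

lemma Group.card_le_pow_rank {E : Type*} [CommGroup E] [Finite E] {n : ℕ} [NeZero n]
    (hE : ∀ y : E, y ^ n = 1) : Nat.card E ≤ n ^ Group.rank E := by
  classical
  obtain ⟨S, hcard, hS⟩ := Group.rank_spec E
  let Φ : ((_ : S) → Multiplicative (ZMod n)) →* E :=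
    MonoidHom.noncommPiCoprod (fun s => zmodPowersHom n (hE s)) fun _ _ _ _ _ => Commute.all _ _
  have hΦ : Function.Surjective Φ := by
    rw [← MonoidHom.range_eq_top, eq_top_iff, ← hS, closure_le]
    intro s hs
    refine ⟨Pi.mulSingle ⟨s, hs⟩ (Multiplicative.ofAdd 1), ?_⟩
    refine (MonoidHom.noncommPiCoprod_mulSingle _ _ _).trans ?_
    rw [zmodPowersHom_apply, toAdd_ofAdd,
      ZMod.val_one_eq_one_mod, ← pow_eq_pow_mod 1 (hE s), pow_one]
  calc Nat.card E ≤ Nat.card ((_ : S) → Multiplicative (ZMod n)) :=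
        Nat.card_le_card_of_surjective Φ hΦ
    _ = n ^ Group.rank E := by
        simp [hcard]

section Decomposition

variable {p : ℕ} {X : Type*} [CommGroup X] {m : ℕ} {e : Fin m → ℕ}

lemma exists_hasDecomp (hp : p.Prime) [Finite X] (hX : IsPGroup p X) :
    ∃ (m : ℕ) (e : Fin m → ℕ), HasDecomp p X e := by
  classical
  have : Fact p.Prime := ⟨hp⟩
  obtain ⟨ι, _, n, hn, ⟨ι0⟩⟩ := CommGroup.equiv_prod_multiplicative_zmod_of_finite X
  have hpow : ∀ i, ∃ d, n i = p ^ d := fun i => by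
    obtain ⟨d, hd⟩ := IsPGroup.iff_orderOf.mp hX (ι0.symm (Pi.mulSingle i (.ofAdd 1)))
    rw [MulEquiv.orderOf_eq, orderOf_piMulSingle, orderOf_ofAdd_eq_addOrderOf,
      ZMod.addOrderOf_one] at hd
    exact ⟨d, hd⟩
  choose d hd using hpow
  let κ : Fin (Fintype.card ι) ≃ ι := (Fintype.equivFin ι).symm
  let τ : Fin (Fintype.card ι) ≃ ι := (Tuple.sort (OrderDual.toDual ∘ d ∘ κ)).trans κ
  let M i := Multiplicative (ZMod (n i))
  let reindex : ((i : ι) → M i) ≃* ((j : Fin _) → M (τ j)) :=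
    { Equiv.piCongrLeft' M τ.symm with map_mul' := fun _ _ => rfl }
  refine ⟨_, d ∘ τ, ?_, fun j => ?_, ⟨ι0.trans (reindex.trans
    (MulEquiv.piCongrRight fun j =>
      (ZMod.ringEquivCongr (hd (τ j))).toAddEquiv.toMultiplicative))⟩⟩
  · exact monotone_toDual_comp_iff.mp (Tuple.monotone_sort (OrderDual.toDual ∘ d ∘ κ))
  · have h1 := hn (τ j)
    rw [hd (τ j)] at h1
    exact Nat.pos_of_ne_zero fun h0 => by rw [Function.comp_apply] at h0; simp [h0] at h1

lemma HasDecomp.index_range_powMonoidHom (hp : p.Prime) (hd : HasDecomp p X e) (k : ℕ) :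
    (powMonoidHom (p ^ k) : X →* X).range.index = p ^ ∑ j, min (e j) k := by
  obtain ⟨-, -, ⟨ι⟩⟩ := hd
  rw [← index_map_equiv _ ι, MulEquiv.map_range_powMonoidHom, index_eq_card,
    Nat.card_congr (QuotientGroup.mulEquivPiModRangePowMonoidHom _ _).toEquiv, Nat.card_pi,
    ← Finset.prod_pow_eq_pow_sum]
  refine Finset.prod_congr rfl fun j _ => ?_
  have : NeZero (p ^ e j) := ⟨(pow_pos hp.pos _).ne'⟩
  rw [← index_eq_card, IsCyclic.index_powMonoidHom_range, Nat.card_congr Multiplicative.toAdd,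
    Nat.card_zmod]
  rcases le_total (e j) k with h | h
  · rw [min_eq_left h, Nat.gcd_eq_left (pow_dvd_pow p h)]
  · rw [min_eq_right h, Nat.gcd_eq_right (pow_dvd_pow p h)]

lemma HasDecomp.index_range_powMonoidHom_prime (hp : p.Prime) (hd : HasDecomp p X e) :
    (powMonoidHom p : X →* X).range.index = p ^ m := by
  have h := hd.index_range_powMonoidHom hp 1
  rwa [pow_one, Finset.sum_congr rfl fun j _ => min_eq_right (hd.2.1 j), Finset.sum_const,
    Finset.card_univ, Fintype.card_fin, smul_eq_mul, mul_one] at h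

lemma HasDecomp.rank_eq (hp : p.Prime) [Finite X] (hd : HasDecomp p X e) :
    Group.rank X = m := by
  have : NeZero p := ⟨hp.ne_zero⟩
  apply le_antisymm
  · obtain ⟨-, -, ⟨ι⟩⟩ := hd
    have : ∀ j, NeZero (p ^ e j) := fun j => ⟨(pow_pos hp.pos _).ne'⟩
    exact (Group.rank_congr ι).trans_le Group.rank_pi_le_of_isCyclic
  · set E := X ⧸ (powMonoidHom p : X →* X).range
    have hE : ∀ y : E, y ^ p = 1 := fun y => by
      induction y using QuotientGroup.induction_on with
      | H x => exact (QuotientGroup.eq_one_iff _).mpr ⟨x, rfl⟩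
    have hcard : p ^ m ≤ p ^ Group.rank X := calc
      p ^ m = Nat.card E := by rw [← index_eq_card, hd.index_range_powMonoidHom_prime hp]
      _ ≤ p ^ Group.rank E := Group.card_le_pow_rank hE
      _ ≤ p ^ Group.rank X := Nat.pow_le_pow_right hp.pos
        (Group.rank_le_of_surjective _ (QuotientGroup.mk'_surjective _))
    exact (Nat.pow_le_pow_iff_right hp.one_lt).mp hcard

lemma HasDecomp.mem_range_powMonoidHom_of_forall_hom_eq_one (hp : p.Prime)
    (hd : HasDecomp p X e) {C : Type*} [Group C] {g : C} {c : ℕ} (hg : orderOf g = p ^ c)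
    {a : X} (ha : ∀ φ : X →* C, φ a = 1) : a ∈ (powMonoidHom (p ^ c)).range := by
  obtain ⟨-, -, ⟨ι⟩⟩ := hd
  have hcoord : ∀ j, ι a j ∈ (powMonoidHom (p ^ c)).range := fun j =>
    ZMod.mem_range_powMonoidHom_of_forall_hom_eq_one hp hg _ fun φ =>
      ha (φ.comp ((Pi.evalMonoidHom _ j).comp ι.toMonoidHom))
  choose w hw using hcoord
  refine ⟨ι.symm w, ?_⟩
  rw [powMonoidHom_apply, ← map_pow, ι.symm_apply_eq]
  exact funext hw

end Decomposition

section Surjection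

variable {A Q : Type*} [CommGroup A] [CommGroup Q] {π : A →* Q}

lemma range_powMonoidHom_le_of_dvd {d n : ℕ} (h : d ∣ n) :
    (powMonoidHom n : A →* A).range ≤ (powMonoidHom d).range := by
  rintro a ⟨b, rfl⟩
  obtain ⟨t, rfl⟩ := h
  exact ⟨b ^ t, by simp only [powMonoidHom_apply, pow_mul']⟩

lemma comap_range_powMonoidHom_of_surjective (hπ : Function.Surjective π) (n : ℕ) :
    (powMonoidHom n : Q →* Q).range.comap π = (powMonoidHom n : A →* A).range ⊔ π.ker := by
  have hmap : (powMonoidHom n : A →* A).range.map π = (powMonoidHom n).range := by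
    rw [MonoidHom.map_range, show π.comp (powMonoidHom n) = (powMonoidHom n).comp π by
      ext; simp, MonoidHom.range_comp, MonoidHom.range_eq_top.mpr hπ, ← MonoidHom.range_eq_map]
  rw [← hmap, comap_map_eq]

lemma index_range_powMonoidHom_le_of_surjective [Finite A] (hπ : Function.Surjective π)
    (n : ℕ) :
    (powMonoidHom n : Q →* Q).range.index ≤ (powMonoidHom n : A →* A).range.index := by
  rw [← index_comap_of_surjective _ hπ, comap_range_powMonoidHom_of_surjective hπ]
  exact index_antitone le_sup_left

lemma ker_le_range_powMonoidHom_iff_index_eq [Finite A] (hπ : Function.Surjective π) (n : ℕ) :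
    π.ker ≤ (powMonoidHom n : A →* A).range ↔
      (powMonoidHom n : Q →* Q).range.index = (powMonoidHom n : A →* A).range.index := by
  rw [← index_comap_of_surjective _ hπ, comap_range_powMonoidHom_of_surjective hπ,
    ← sup_eq_left]
  refine ⟨fun h => by rw [h], fun h => ?_⟩
  exact (le_sup_left.eq_or_lt.resolve_right fun hlt => (index_strictAnti hlt).ne h).symm

end Surjection

section InvariantFactors

open Finset

variable {m : ℕ} {β γ : Fin m → ℕ}

lemma sum_min_succ (e : Fin m → ℕ) (k : ℕ) :
    ∑ j, min (e j) (k + 1) = ∑ j, min (e j) k + #{j | k + 1 ≤ e j} := by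
  rw [card_filter, ← sum_add_distrib]
  exact sum_congr rfl fun j _ => by split_ifs <;> omega

lemma le_of_sum_min_eq (hβ : Antitone β) (hγ : Antitone γ) {c : ℕ}
    (hsum : ∀ k ≤ c, ∑ j, min (β j) k = ∑ j, min (γ j) k) {r : Fin m} (hlt : β r < γ r) :
    c ≤ β r := by
  by_contra! hc
  have hcard : #{j | β r + 1 ≤ β j} = #{j | β r + 1 ≤ γ j} := by
    have h := hsum (β r + 1) hc
    rw [sum_min_succ, sum_min_succ, hsum (β r) hc.le] at h
    omega
  have hr : r < #{j | β r + 1 ≤ γ j} := (Tuple.lt_card_ge_iff_apply_ge_of_antitone hγ).mpr hlt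
  rw [← hcard, Tuple.lt_card_ge_iff_apply_ge_of_antitone hβ] at hr
  omega

lemma exists_last_ne (h : β ≠ γ) : ∃ r, β r ≠ γ r ∧ ∀ j, r < j → β j = γ j := by
  classical
  obtain ⟨j, hj⟩ := Function.ne_iff.mp h
  obtain ⟨r, hr, hmax⟩ := exists_max_image {j | β j ≠ γ j} id ⟨j, by simpa using hj⟩
  refine ⟨r, by simpa using hr, fun j hj => ?_⟩
  by_contra hne
  exact (hmax j (by simpa using hne)).not_gt hj

lemma sum_min_eq_of_le_at_last_ne (hβ : Antitone β) (hγ : Antitone γ)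
    (hle : ∀ k, ∑ j, min (β j) k ≤ ∑ j, min (γ j) k) {c : ℕ}
    (hvar : ∀ r, β r < γ r → (∀ j, r < j → β j = γ j) → c ≤ β r) {k : ℕ} (hk : k ≤ c) :
    ∑ j, min (β j) k = ∑ j, min (γ j) k := by
  by_cases hne : β = γ
  · rw [hne]
  obtain ⟨r, hr, hlast⟩ := exists_last_ne hne
  rcases hr.lt_or_gt with hlt | hgt
  · have hc := hvar r hlt hlast
    refine sum_congr rfl fun j _ => ?_
    rcases le_or_gt j r with h | h
    · have := hβ h
      have := hγ h
      omega
    · rw [hlast j h]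
  · -- at `k = β r` the index `r` makes the sum for `γ` strictly smaller
    refine absurd (hle (β r)) (not_le.mpr (sum_lt_sum (fun j _ => ?_) ⟨r, mem_univ r, by omega⟩))
    rcases le_or_gt j r with h | h
    · have := hβ h
      omega
    · rw [hlast j h]

end InvariantFactors

section FiniteAbelianPGroup

variable {p : ℕ} {A Q : Type*} [CommGroup A] [CommGroup Q] [Finite A] [Finite Q]

lemma index_range_powMonoidHom_prime_eq_pow_rank (hp : p.Prime) (hA : IsPGroup p A) :
    (powMonoidHom p : A →* A).range.index = p ^ Group.rank A := by
  obtain ⟨m, e, hd⟩ := exists_hasDecomp hp hA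
  rw [hd.index_range_powMonoidHom_prime hp, hd.rank_eq hp]

lemma ker_le_range_powMonoidHom_iff_rank_eq_and_varLe (hp : p.Prime) (hA : IsPGroup p A)
    {π : A →* Q} (hπ : Function.Surjective π) {c : ℕ} (hc : 1 ≤ c) :
    π.ker ≤ (powMonoidHom (p ^ c)).range ↔
      Group.rank Q = Group.rank A ∧ varLe p Q A (p ^ c) := by
  have hQ : IsPGroup p Q := hA.of_surjective π hπ
  have hsum_iff : ∀ {mQ mA : ℕ} {β : Fin mQ → ℕ} {γ : Fin mA → ℕ}, HasDecomp p Q β →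
      HasDecomp p A γ → ∀ k, (powMonoidHom (p ^ k) : Q →* Q).range.index =
        (powMonoidHom (p ^ k) : A →* A).range.index ↔
        ∑ j, min (β j) k = ∑ j, min (γ j) k := fun hdβ hdγ k => by
    rw [hdβ.index_range_powMonoidHom hp, hdγ.index_range_powMonoidHom hp]
    exact Nat.pow_right_injective hp.two_le |>.eq_iff
  have hindex : π.ker ≤ (powMonoidHom (p ^ c)).range ↔ ∀ k ≤ c,
      (powMonoidHom (p ^ k) : Q →* Q).range.index =
        (powMonoidHom (p ^ k) : A →* A).range.index := by
    simp only [← ker_le_range_powMonoidHom_iff_index_eq hπ]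
    exact ⟨fun h k hk => h.trans (range_powMonoidHom_le_of_dvd (pow_dvd_pow p hk)),
      fun h => h c le_rfl⟩
  rw [hindex]
  constructor
  · intro h
    refine ⟨?_, fun _ β γ hdβ hdγ r hlt _ => Nat.pow_le_pow_right hp.pos
      (le_of_sum_min_eq hdβ.1 hdγ.1 (fun k hk => (hsum_iff hdβ hdγ k).mp (h k hk)) hlt)⟩
    have h1 := h 1 hc
    rw [pow_one, index_range_powMonoidHom_prime_eq_pow_rank hp hQ,
      index_range_powMonoidHom_prime_eq_pow_rank hp hA] at h1
    exact Nat.pow_right_injective hp.two_le h1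
  · rintro ⟨hrank, hvar⟩ k hk
    obtain ⟨m, γ, hdγ⟩ := exists_hasDecomp hp hA
    obtain ⟨mQ, β, hdβ⟩ := exists_hasDecomp hp hQ
    obtain rfl : mQ = m := by rw [← hdβ.rank_eq hp, ← hdγ.rank_eq hp, hrank]
    have hle : ∀ k, ∑ j, min (β j) k ≤ ∑ j, min (γ j) k := fun k => by
      have h := index_range_powMonoidHom_le_of_surjective hπ (p ^ k)
      rwa [hdβ.index_range_powMonoidHom hp, hdγ.index_range_powMonoidHom hp,
        Nat.pow_le_pow_iff_right hp.one_lt] at h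
    refine (hsum_iff hdβ hdγ k).mpr (sum_min_eq_of_le_at_last_ne hdβ.1 hdγ.1 hle
      (fun r hlt hlast => ?_) hk)
    exact (Nat.pow_le_pow_iff_right hp.one_lt).mp (hvar _ β γ hdβ hdγ r hlt hlast)

end FiniteAbelianPGroup

lemma forall_hom_eq_one_iff_mem_range_powMonoidHom {p : ℕ} (hp : p.Prime) {A C : Type*}
    [CommGroup A] [Finite A] [CommGroup C] [Finite C] (hA : IsPGroup p A) (hC : IsPGroup p C)
    (a : A) : (∀ φ : A →* C, φ a = 1) ↔ a ∈ (powMonoidHom (Monoid.exponent C)).range := by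
  refine ⟨fun h => ?_, ?_⟩
  · have : Fact p.Prime := ⟨hp⟩
    obtain ⟨c, hc⟩ := isPGroup_iff_exponent_eq_pow.mp hC
    obtain ⟨g, hg⟩ := Monoid.exists_orderOf_eq_exponent (Monoid.ExponentExists.of_finite (G := C))
    obtain ⟨m, e, hd⟩ := exists_hasDecomp hp hA
    rw [hc] at hg ⊢
    exact hd.mem_range_powMonoidHom_of_forall_hom_eq_one hp hg h
  · rintro ⟨b, rfl⟩ φ
    rw [powMonoidHom_apply, map_pow, Monoid.pow_exponent_eq_one]

section CentralAutomorphisms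

variable {G : Type*} [Group G] {K : Subgroup G}

def homOfMemAutCentMod (hK : K ≤ center G) {α : MulAut G} (hα : α ∈ autCentMod K) :
    G →* K where
  toFun x := ⟨x⁻¹ * α x, hα x⟩
  map_one' := by ext; simp
  map_mul' x y := by
    ext
    have hcomm := mem_center_iff.mp (hK (hα x)) y⁻¹
    simp only [map_mul, mul_inv_rev, Subgroup.coe_mul]
    calc y⁻¹ * x⁻¹ * (α x * α y) = y⁻¹ * (x⁻¹ * α x) * α y := by group
      _ = x⁻¹ * α x * y⁻¹ * α y := by rw [hcomm]
      _ = x⁻¹ * α x * (y⁻¹ * α y) := by group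

def idMulHom (hK : K ≤ center G) (f : G →* K) : G →* G where
  toFun x := x * f x
  map_one' := by simp
  map_mul' x y := by
    have hcomm := mem_center_iff.mp (hK (f x).2) y
    simp only [map_mul, Subgroup.coe_mul]
    calc x * y * (↑(f x) * ↑(f y)) = x * (y * f x) * f y := by group
      _ = x * (f x * y) * f y := by rw [hcomm]
      _ = x * f x * (y * f y) := by group

lemma idMulHom_injective (hK : K ≤ center G) {f : G →* K} (hf : K ≤ f.ker) :
    Function.Injective (idMulHom hK f) := by
  refine (injective_iff_map_eq_one _).mpr fun x (hx : x * f x = 1) => ?_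
  have hxK : x ∈ K := by
    rw [eq_inv_of_mul_eq_one_left hx]
    exact K.inv_mem (f x).2
  have hfx : f x = 1 := hf hxK
  simpa [hfx] using hx

noncomputable def mulAutOfHom [Finite G] (hK : K ≤ center G) (f : G →* K) (hf : K ≤ f.ker) :
    MulAut G :=
  MulEquiv.ofBijective (idMulHom hK f)
    (Finite.injective_iff_bijective.mp (idMulHom_injective hK hf))

lemma autCentMod_le_autFix_iff [Finite G] (hK : K ≤ center G) (hKG : K ≤ commutator G)
    (Y : Subgroup G) : autCentMod K ≤ autFix Y ↔ ∀ f : G →* K, ∀ y ∈ Y, f y = 1 := by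
  let := centralCommGroup hK
  refine ⟨fun h f y hy => ?_, fun h α hα y hy => ?_⟩
  · have hf : K ≤ f.ker := hKG.trans (Abelianization.commutator_subset_ker f)
    have hmem : mulAutOfHom hK f hf ∈ autCentMod K := fun x => by
      change x⁻¹ * (x * f x) ∈ K
      rw [inv_mul_cancel_left]
      exact (f x).2
    have hfix : y * f y = y := h hmem y hy
    exact Subtype.ext (mul_eq_left.mp hfix)
  · exact (inv_mul_eq_one.mp (congrArg Subtype.val (h (homOfMemAutCentMod hK hα) y hy))).symm

end CentralAutomorphisms

lemma IsPGroup.abelianization {p : ℕ} {G : Type*} [Group G] (hG : IsPGroup p G) :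
    IsPGroup p (Abelianization G) :=
  hG.of_surjective Abelianization.of QuotientGroup.mk_surjective

lemma forall_hom_commutator_eq_one_iff {p : ℕ} (hp : p.Prime) {G : Type*} [Group G] [Finite G]
    (hG : IsPGroup p G) (hle : commutator G ≤ center G) (Y : Subgroup G) :
    (∀ f : G →* commutator G, ∀ y ∈ Y, f y = 1) ↔
      Y.map Abelianization.of ≤ (powMonoidHom (Monoid.exponent (commutator G))).range := by
  let := centralCommGroup hle
  have hsep := forall_hom_eq_one_iff_mem_range_powMonoidHom hp hG.abelianization
    (hG.to_subgroup (commutator G))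
  rw [map_le_iff_le_comap]
  refine ⟨fun h y hy => (hsep _).mp fun φ => h (φ.comp Abelianization.of) y hy, fun h f y hy => ?_⟩
  exact (hsep _).mpr (h hy) (Abelianization.lift f)

open scoped commutatorElement in
def commGroupQuotientOfCommutatorLe {G : Type*} [Group G] {N : Subgroup G} [N.Normal]
    (h : commutator G ≤ N) : CommGroup (G ⧸ N) where
  mul_comm a b := by
    induction a using QuotientGroup.induction_on with | H x =>
    induction b using QuotientGroup.induction_on with | H y =>
    rw [← QuotientGroup.mk_mul, ← QuotientGroup.mk_mul, QuotientGroup.eq]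
    have hxy : (x * y)⁻¹ * (y * x) = ⁅y⁻¹, x⁻¹⁆ := by rw [commutatorElement_def]; group
    rw [hxy]
    exact h (commutator_mem_commutator (mem_top _) (mem_top _))

/-- Corollary 2.8: for a finite `p`-group `G` of nilpotence class 2 (i.e. `⊥ ≠ G' ≤ Z(G)`),
`IA(G) = IA(G)*` iff either `G' = Z(G)`, or `d(G/Z(G)) = d(G/G')` and
`exp(G') ≤ var(G/Z(G), G/G')`. -/
theorem IA_eq_IAstar_iff {p : ℕ} (hp : p.Prime) {G : Type*} [Group G] [Fintype G]
    (hG : IsPGroup p G)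
    (hle : commutator G ≤ Subgroup.center G) (hne : commutator G ≠ ⊥) :
    autCentMod (commutator G) =
        autCentMod (commutator G) ⊓ autFix (Subgroup.center G) ↔
      commutator G = Subgroup.center G ∨
        (Group.rank (G ⧸ Subgroup.center G) = Group.rank (G ⧸ commutator G) ∧
          varLe p (G ⧸ Subgroup.center G) (G ⧸ commutator G)
            (Monoid.exponent ↥(commutator G))) := by
  have : Fact p.Prime := ⟨hp⟩
  let := commGroupQuotientOfCommutatorLe hle
  obtain ⟨c, hc⟩ := isPGroup_iff_exponent_eq_pow.mp (hG.to_subgroup (commutator G))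
  have hc1 : 1 ≤ c := Nat.one_le_iff_ne_zero.mpr fun h0 => hne <| by
    rw [h0, pow_zero, Monoid.exp_eq_one_iff] at hc
    exact eq_bot_of_subsingleton _
  let π : Abelianization G →* G ⧸ center G :=
    QuotientGroup.map _ _ (.id G) (by rwa [comap_id])
  have hπ : Function.Surjective π :=
    QuotientGroup.map_surjective_of_surjective _ _ _ QuotientGroup.mk_surjective _
  have hker : π.ker = (center G).map Abelianization.of :=
    (QuotientGroup.ker_map _ _ _ _).trans (by rw [comap_id]; rfl)
  have key := ker_le_range_powMonoidHom_iff_rank_eq_and_varLe hp hG.abelianization hπ hc1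
  rw [eq_comm, inf_eq_left, autCentMod_le_autFix_iff hle le_rfl,
    forall_hom_commutator_eq_one_iff hp hG hle, ← hker, hc]
  refine ⟨fun h => .inr (key.mp h), ?_⟩
  rintro (h | h)
  · rw [hker, ← h, ← Abelianization.ker_of, map_le_iff_le_comap]
    exact ker_le_comap _ _
  · exact key.mpr h
end

section
/- Let G be a finite non-abelian p-group. Then IA(G)* = Aut_c(G) if and only if G' = Z(G). -/
/-!
Inner automorphisms lie in `IA(G)*`, so if `IA(G)* = Aut_c(G)` they are central and `G' ≤ Z(G)`.
For the reverse inclusion take `z ∈ Z(G) \ G'` of order `p ^ s` and a character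
`k : G/G' → ℤ/p^s`. When `1 + k z` is a unit, `x ↦ x z^(k x)` is injective, hence a central
automorphism, and it lies outside `IA(G)*` as soon as `k z ≠ 0` (it moves `z`) or `k` takes the
value `1` (its displacement `z` is not in `G'`). Such a `k` is read off from a cyclic direct factor
of `G/G'` where `z` is nontrivial, doubled if `1 + k z` is not a unit, except when `p ^ s = 2`:
there `k` comes from a cyclic quotient of `(G/G')/⟨z⟩`, which is nontrivial because `G/G'` cyclic
and `G' ≤ Z(G)` would make `G` abelian. Conversely, a central automorphism fixes every
commutator, so `Aut_c(G)` fixes `G'` pointwise, which gives the other direction.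
-/

open Subgroup
open scoped commutatorElement

section ZModPow

variable {G : Type*} [Group G] {n : ℕ} [NeZero n]

def zmodPowHom (z : G) (hz : z ^ n = 1) : Multiplicative (ZMod n) →* G where
  toFun c := z ^ c.toAdd.val
  map_one' := by simp
  map_mul' a b := by
    rw [toAdd_mul, ZMod.val_add, ← pow_add]
    exact pow_eq_pow_iff_modEq.2 ((Nat.mod_modEq _ n).of_dvd (orderOf_dvd_of_pow_eq_one hz))

@[simp]
theorem zmodPowHom_apply (z : G) (hz : z ^ n = 1) (c : Multiplicative (ZMod n)) :
    zmodPowHom z hz c = z ^ c.toAdd.val :=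
  rfl

theorem pow_val_eq_one_iff {z : G} (hz : orderOf z = n) {c : ZMod n} : z ^ c.val = 1 ↔ c = 0 := by
  rw [← orderOf_dvd_iff_pow_eq_one, hz, ← ZMod.natCast_eq_zero_iff, ZMod.natCast_zmod_val]

end ZModPow

section CentralAutomorphism

variable {G : Type*} [Group G]

theorem mem_autCentMod {X : Subgroup G} {α : MulAut G} :
    α ∈ autCentMod X ↔ ∀ x, x⁻¹ * α x ∈ X :=
  Iff.rfl

theorem exists_mulAut_apply_eq_mul [Finite G] (f : G →* G) (hf : ∀ x, f x ∈ center G)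
    (hinj : ∀ x, x * f x = 1 → x = 1) : ∃ α : MulAut G, ∀ x, α x = x * f x := by
  let φ : G →* G := MonoidHom.mk' (fun x => x * f x) fun x y => by
    rw [map_mul, mul_assoc, mul_assoc, ← mul_assoc y, mem_center_iff.1 (hf x) y, mul_assoc]
  have hφ : Function.Injective φ := (injective_iff_map_eq_one φ).2 hinj
  exact ⟨MulEquiv.ofBijective φ (Finite.injective_iff_bijective.1 hφ), fun _ => rfl⟩

/-- A solution of `x z ^ (k x) = 1` is a power `z ^ c`, and then `c (1 + k z) = 0`. -/
theorem exists_mulAut_apply_eq_mul_pow [Finite G] {n : ℕ} [NeZero n] {z : G}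
    (hzc : z ∈ center G) (hz : orderOf z = n) (k : G →* Multiplicative (ZMod n))
    (hk : IsUnit (1 + (k z).toAdd)) : ∃ α : MulAut G, ∀ x, α x = x * z ^ (k x).toAdd.val := by
  have hzn : z ^ n = 1 := hz ▸ pow_orderOf_eq_one z
  refine exists_mulAut_apply_eq_mul ((zmodPowHom z hzn).comp k)
    (fun x => pow_mem hzc _) fun x hx => ?_
  set c := -(k x).toAdd
  have hxc : x = z ^ c.val := by
    rw [eq_inv_of_mul_eq_one_left hx, MonoidHom.comp_apply, ← map_inv]
    rfl
  have hc : c * (1 + (k z).toAdd) = 0 := by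
    have : (k x).toAdd = c * (k z).toAdd := by
      rw [hxc, map_pow, toAdd_pow, nsmul_eq_mul, ZMod.natCast_zmod_val]
    rw [mul_add, mul_one, ← this, neg_add_cancel]
  rw [hxc, (pow_val_eq_one_iff hz).2 (hk.mul_left_eq_zero.1 hc)]

theorem commutator_le_iff_forall_conj_mem_autCentMod {X : Subgroup G} :
    commutator G ≤ X ↔ ∀ g, MulAut.conj g ∈ autCentMod X := by
  have hconj (g x : G) : x⁻¹ * MulAut.conj g x = ⁅x⁻¹, g⁆ := by
    simp [commutatorElement_def, mul_assoc]
  rw [_root_.commutator_def, Subgroup.commutator_le]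
  simp only [mem_autCentMod, hconj]
  refine ⟨fun h g x => h _ (mem_top _) _ (mem_top _), fun h a _ b _ => ?_⟩
  simpa using h b a⁻¹

theorem conj_mem_autFix_center (g : G) : MulAut.conj g ∈ autFix (center G) := fun y hy => by
  rw [MulAut.conj_apply, mem_center_iff.1 hy g, mul_inv_cancel_right]

theorem commutatorElement_mul_left_of_mem_center {u : G} (hu : u ∈ center G) (a b : G) :
    ⁅a * u, b⁆ = ⁅a, b⁆ := by
  rw [commutatorElement_def, commutatorElement_def, mul_assoc a, ← mem_center_iff.1 hu b]
  group

theorem autCentMod_center_le_autFix_commutator :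
    autCentMod (center G) ≤ autFix (commutator G) := by
  intro α hα
  have hαa (a : G) : α a = a * (a⁻¹ * α a) := (mul_inv_cancel_left a _).symm
  suffices commutator G ≤ MonoidHom.eqLocus α.toMonoidHom (MonoidHom.id G) from
    fun y hy => this hy
  rw [_root_.commutator_def, Subgroup.commutator_le]
  intro a _ b _
  change α ⁅a, b⁆ = ⁅a, b⁆
  rw [map_commutatorElement, hαa a, commutatorElement_mul_left_of_mem_center (hα a),
    ← commutatorElement_inv, hαa b, commutatorElement_mul_left_of_mem_center (hα b),
    commutatorElement_inv]

end CentralAutomorphism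

section FiniteAbelian

theorem exists_surjective_zmod_of_dvd {A : Type*} [Group A] {m n : ℕ} (h : n ∣ m)
    {π : A →* Multiplicative (ZMod m)} (hπ : Function.Surjective π) :
    ∃ k : A →* Multiplicative (ZMod n), Function.Surjective k :=
  ⟨(ZMod.castHom h (ZMod n)).toAddMonoidHom.toMultiplicative.comp π,
    (ZMod.castHom_surjective h).comp hπ⟩

variable {A : Type*} [CommGroup A] [Finite A]

theorem CommGroup.exists_surjective_zmod_apply_ne_one {a : A} (ha : a ≠ 1) :
    ∃ n, 1 < n ∧
      ∃ π : A →* Multiplicative (ZMod n), Function.Surjective π ∧ π a ≠ 1 := by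
  obtain ⟨ι, _, n, hn, ⟨e⟩⟩ := CommGroup.equiv_prod_multiplicative_zmod_of_finite A
  obtain ⟨i, hi⟩ : ∃ i, e a i ≠ 1 := by
    contrapose! ha
    exact (MulEquiv.map_eq_one_iff e).mp (funext ha)
  exact ⟨n i, hn i, (Pi.evalMonoidHom _ i).comp e.toMonoidHom,
    (Function.surjective_eval i).comp e.surjective, hi⟩

theorem IsPGroup.exists_surjective_zmod_pow_apply_ne_one {p : ℕ} [Fact p.Prime]
    (hA : IsPGroup p A) {a : A} (ha : a ≠ 1) :
    ∃ m, 0 < m ∧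
      ∃ π : A →* Multiplicative (ZMod (p ^ m)), Function.Surjective π ∧ π a ≠ 1 := by
  obtain ⟨n, hn, π, hπ, hπa⟩ := CommGroup.exists_surjective_zmod_apply_ne_one ha
  have : NeZero n := ⟨by omega⟩
  obtain ⟨m, hm⟩ := IsPGroup.iff_card.1 (hA.of_surjective π hπ)
  rw [Nat.card_congr Multiplicative.toAdd, Nat.card_zmod] at hm
  subst hm
  exact ⟨m, Nat.pos_of_ne_zero (by rintro rfl; simp at hn), π, hπ, hπa⟩

end FiniteAbelian

section ZModPrimePow

variable {p s : ℕ} [Fact p.Prime]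

theorem ZMod.isUnit_iff_castHom_ne_zero (hs : s ≠ 0) {x : ZMod (p ^ s)} :
    IsUnit x ↔ ZMod.castHom (dvd_pow_self p hs) (ZMod p) x ≠ 0 := by
  rw [← ZMod.natCast_zmod_val x, ZMod.isUnit_natCast_iff_not_dvd_pow Fact.out
    (Nat.pos_of_ne_zero hs), map_natCast, Ne, ZMod.natCast_eq_zero_iff]

theorem ZMod.isUnit_of_not_isUnit_one_add (hs : s ≠ 0) {t : ZMod (p ^ s)}
    (h : ¬ IsUnit (1 + t)) : IsUnit t := by
  simp only [ZMod.isUnit_iff_castHom_ne_zero hs, map_add, map_one, not_not] at h ⊢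
  simp [eq_neg_of_add_eq_zero_right h]

theorem ZMod.isUnit_one_add_add_of_not_isUnit_one_add (hs : s ≠ 0) {t : ZMod (p ^ s)}
    (h : ¬ IsUnit (1 + t)) : IsUnit (1 + (t + t)) := by
  simp only [ZMod.isUnit_iff_castHom_ne_zero hs, map_add, map_one, not_not] at h ⊢
  simp [eq_neg_of_add_eq_zero_right h]

variable {A : Type*} [CommGroup A]

theorem exists_zmod_pow_apply_ne_one_isUnit_of_lt {m : ℕ} {a : A}
    {π : A →* Multiplicative (ZMod (p ^ m))} (hπa : π a ≠ 1) (hms : m < s) :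
    ∃ k : A →* Multiplicative (ZMod (p ^ s)), k a ≠ 1 ∧ IsUnit (1 + (k a).toAdd) := by
  have hp : 0 < p := (Fact.out : p.Prime).pos
  have hw : (Multiplicative.ofAdd ((p ^ (s - m) : ℕ) : ZMod (p ^ s))) ^ p ^ m = 1 := by
    rw [← ofAdd_nsmul, nsmul_eq_mul, ← Nat.cast_mul, ← pow_add, Nat.add_sub_cancel' hms.le,
      ZMod.natCast_self, ofAdd_zero]
  set v := (π a).toAdd.val
  have hka : ((zmodPowHom _ hw).comp π a).toAdd = ((v * p ^ (s - m) : ℕ) : ZMod (p ^ s)) := by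
    simp [v, toAdd_pow]
  refine ⟨(zmodPowHom _ hw).comp π, fun h => hπa ?_, ?_⟩
  · have hv : p ^ m ∣ v := by
      rw [← toAdd_eq_zero, hka, ZMod.natCast_eq_zero_iff, ← pow_sub_mul_pow p hms.le,
        mul_comm v] at h
      exact Nat.dvd_of_mul_dvd_mul_left (pow_pos hp _) h
    rwa [← ZMod.natCast_eq_zero_iff, ZMod.natCast_zmod_val, toAdd_eq_zero] at hv
  · rw [ZMod.isUnit_iff_castHom_ne_zero (by omega), map_add, map_one, hka, map_natCast,
      Nat.cast_mul, Nat.cast_pow, ZMod.natCast_self, zero_pow (Nat.sub_ne_zero_of_lt hms),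
      mul_zero, add_zero]
    exact one_ne_zero

theorem IsPGroup.exists_zmod_pow_isUnit_one_add [Finite A] (hA : IsPGroup p A) {a : A}
    (ha : a ≠ 1) (hcyc : zpowers a ≠ ⊤) (hs : s ≠ 0) :
    ∃ k : A →* Multiplicative (ZMod (p ^ s)),
      IsUnit (1 + (k a).toAdd) ∧ (k a ≠ 1 ∨ ∃ b, k b = .ofAdd 1) := by
  obtain ⟨m, hm, π, hπ, hπa⟩ := hA.exists_surjective_zmod_pow_apply_ne_one ha
  rcases lt_or_ge m s with hms | hsm
  · obtain ⟨k, hka, hk⟩ := exists_zmod_pow_apply_ne_one_isUnit_of_lt hπa hms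
    exact ⟨k, hk, .inl hka⟩
  obtain ⟨k, hk⟩ := exists_surjective_zmod_of_dvd (pow_dvd_pow p hsm) hπ
  by_cases hu : IsUnit (1 + (k a).toAdd)
  · exact ⟨k, hu, .inr (hk _)⟩
  by_cases h2 : (2 : ZMod (p ^ s)) = 0
  · have hs1 : s ≤ 1 := by
      have h := (ZMod.natCast_eq_zero_iff 2 (p ^ s)).1 (by exact_mod_cast h2)
      by_contra! hs
      have := Nat.le_of_dvd two_pos ((pow_dvd_pow p hs).trans h)
      have := (Fact.out : p.Prime).two_le
      nlinarith
    obtain ⟨b, hb⟩ : ∃ b, b ∉ zpowers a := by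
      by_contra! h
      exact hcyc ((eq_top_iff' _).2 h)
    obtain ⟨m', hm', π', hπ', -⟩ :=
      (hA.to_quotient (zpowers a)).exists_surjective_zmod_pow_apply_ne_one
        (a := QuotientGroup.mk b) (by rwa [Ne, QuotientGroup.eq_one_iff])
    obtain ⟨k', hk'⟩ := exists_surjective_zmod_of_dvd (pow_dvd_pow p (by omega : s ≤ m')) hπ'
    refine ⟨k'.comp (QuotientGroup.mk' _), ?_,
      .inr ((hk'.comp (QuotientGroup.mk'_surjective _)) _)⟩
    simp [(QuotientGroup.eq_one_iff a).2 (mem_zpowers a)]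
  · refine ⟨k * k, ZMod.isUnit_one_add_add_of_not_isUnit_one_add hs hu, .inl fun h => h2 ?_⟩
    rwa [← toAdd_eq_zero, MonoidHom.mul_apply, toAdd_mul, ← two_mul,
      (ZMod.isUnit_of_not_isUnit_one_add hs hu).mul_left_eq_zero] at h

end ZModPrimePow

theorem not_isCyclic_abelianization {G : Type*} [Group G] (hna : ¬ ∀ x y : G, x * y = y * x)
    (hle : commutator G ≤ center G) : ¬ IsCyclic (Abelianization G) := fun _ =>
  hna <| isMulCommutative_iff.1 <|
    Abelianization.of.isMulCommutative_of_isCyclic_of_ker_le_center (by rwa [Abelianization.ker_of])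

theorem center_le_commutator_of_autCentMod_le {p : ℕ} [Fact p.Prime] {G : Type*} [Group G]
    [Finite G] (hG : IsPGroup p G) (hna : ¬ ∀ x y : G, x * y = y * x)
    (hle : commutator G ≤ center G)
    (h : autCentMod (center G) ≤ autCentMod (commutator G) ⊓ autFix (center G)) :
    center G ≤ commutator G := by
  intro z hzc
  by_contra hz
  have hofz : Abelianization.of z ≠ 1 := by
    rwa [Ne, ← MonoidHom.mem_ker, Abelianization.ker_of]
  obtain ⟨s, hs⟩ := IsPGroup.iff_orderOf.1 hG z
  have hs0 : s ≠ 0 := by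
    rintro rfl
    exact hz (orderOf_eq_one_iff.1 (by simpa using hs) ▸ one_mem _)
  have hcyc : zpowers (Abelianization.of z) ≠ ⊤ := fun htop =>
    not_isCyclic_abelianization hna hle (isCyclic_iff_exists_zpowers_eq_top.2 ⟨_, htop⟩)
  have hA : IsPGroup p (Abelianization G) := hG.of_surjective _ (QuotientGroup.mk'_surjective _)
  obtain ⟨k, hunit, hk⟩ := hA.exists_zmod_pow_isUnit_one_add hofz hcyc hs0
  obtain ⟨α, hα⟩ := exists_mulAut_apply_eq_mul_pow hzc hs (k.comp Abelianization.of) hunit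
  have hdisp (x : G) : x⁻¹ * α x = z ^ (k (Abelianization.of x)).toAdd.val := by
    rw [hα, inv_mul_cancel_left, MonoidHom.comp_apply]
  obtain ⟨hαG', hαZ⟩ := mem_inf.1 (h fun x => hdisp x ▸ pow_mem hzc _)
  rcases hk with hkz | ⟨b, hb⟩
  · refine hkz (toAdd_eq_zero.1 ((pow_val_eq_one_iff hs).1 ?_))
    rw [← hdisp, hαZ z hzc, inv_mul_cancel]
  · obtain ⟨g, rfl⟩ : ∃ g, Abelianization.of g = b := QuotientGroup.mk'_surjective _ b
    have hps : p ^ s ≠ 1 := (Nat.one_lt_pow hs0 (Fact.out : p.Prime).one_lt).ne'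
    have := hαG' g
    rw [hdisp, hb, toAdd_ofAdd, ZMod.val_one_eq_one_mod, Nat.one_mod_eq_one.2 hps,
      pow_one] at this
    exact hz this

/-- Corollary 2.6: for a finite non-abelian `p`-group `G`,
`IA(G)* = Aut_c(G)` iff `G' = Z(G)`. -/
theorem IAstar_eq_autc_iff {p : ℕ} (hp : p.Prime) {G : Type*} [Group G] [Fintype G]
    (hG : IsPGroup p G) (hna : ¬ ∀ x y : G, x * y = y * x) :
    autCentMod (commutator G) ⊓ autFix (Subgroup.center G) =
        autCentMod (Subgroup.center G) ↔
      commutator G = Subgroup.center G := by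
  refine ⟨fun h => ?_, fun h => ?_⟩
  · have hle : commutator G ≤ center G :=
      commutator_le_iff_forall_conj_mem_autCentMod.2 fun g => h ▸ mem_inf.2
        ⟨commutator_le_iff_forall_conj_mem_autCentMod.1 le_rfl g, conj_mem_autFix_center g⟩
    have := Fact.mk hp
    exact le_antisymm hle (center_le_commutator_of_autCentMod_le hG hna hle h.ge)
  · have := autCentMod_center_le_autFix_commutator (G := G)
    rw [h] at this ⊢
    exact inf_eq_left.2 this
end
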